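/- arXiv:2105.10998 — 7 statements merged into one kernel-verified Lean document; each statement's English description precedes it below -/
import Mathlib

section
/- Fix a prime p and a positive integer n ≥ p, and write the base-p expansion of n as n = Σ_{i=1}^{k} a_i p^{b_i}, where 0 < a_i ≤ p-1 for each i and 0 ≤ b_1 < b_2 < ... < b_k. Then Π_{i=1}^{k} (a_i! · p^{b_i}) ≤ p^(n/2); equivalently, (Π_{i=1}^{k} a_i! · p^{b_i})^2 ≤ p^n. -/
/-!
Since `a ! ≤ p ^ (a - 1)` for `a ≤ p`, each factor satisfies
`(a ! * p ^ b) ^ 2 ≤ p ^ (2 * (a - 1 + b))`, so it suffices to show `∑ 2 * (a i - 1 + b i) ≤ n`.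
A digit with `b ≥ 1` beats its weight `2 * (a - 1 + b)` with `p - 2` to spare, because
`p ^ b ≥ 2 * b + (p - 2)`. Only the units digit (`b = 0`) can exceed its weight, by at most
`p - 2`; but then `n ≥ p` forces a further digit, whose spare covers it.
-/

open Nat Finset

lemma factorial_le_pow_pred_of_le {a p : ℕ} (h : a ≤ p) : a ! ≤ p ^ (a - 1) := by
  rcases Nat.eq_zero_or_pos a with rfl | ha
  · simp
  calc a ! = 1 ! * a.descFactorial (a - 1) := by
        rw [← factorial_mul_descFactorial (Nat.sub_le a 1), Nat.sub_sub_self ha]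
    _ ≤ a ^ (a - 1) := by simpa using descFactorial_le_pow a (a - 1)
    _ ≤ p ^ (a - 1) := Nat.pow_le_pow_left h _

lemma sq_factorial_mul_pow_le {a p : ℕ} (b : ℕ) (h : a ≤ p) :
    (a ! * p ^ b) ^ 2 ≤ p ^ (2 * (a - 1 + b)) := by
  calc (a ! * p ^ b) ^ 2 ≤ (p ^ (a - 1) * p ^ b) ^ 2 := by
        gcongr
        exact factorial_le_pow_pred_of_le h
    _ = p ^ (2 * (a - 1 + b)) := by rw [← pow_add, ← pow_mul, Nat.mul_comm]

lemma two_mul_add_sub_two_le_pow {p b : ℕ} (hp : 2 ≤ p) (hb : 1 ≤ b) :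
    2 * b + (p - 2) ≤ p ^ b := by
  induction b, hb using Nat.le_induction with
  | base => rw [pow_one]; omega
  | succ b hb ih =>
    have h2 : 2 ≤ p ^ b := le_trans hp (Nat.le_self_pow (by omega) p)
    have hstep : 2 * p ^ b ≤ p ^ (b + 1) := by
      rw [pow_succ']
      exact Nat.mul_le_mul_right _ hp
    omega

lemma two_mul_pred_add_add_sub_two_le_mul_pow {p a b : ℕ} (hp : 2 ≤ p) (ha : 1 ≤ a)
    (hb : 1 ≤ b) : 2 * (a - 1 + b) + (p - 2) ≤ a * p ^ b := by
  have hpow := two_mul_add_sub_two_le_pow hp hb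
  have hlead : (a - 1) * 2 ≤ (a - 1) * p ^ b :=
    Nat.mul_le_mul_left _ (le_trans hp (Nat.le_self_pow (by omega) p))
  have hsplit : a * p ^ b = (a - 1) * p ^ b + p ^ b := by
    conv_lhs => rw [← Nat.sub_add_cancel ha]
    ring
  omega

lemma sum_two_mul_pred_add_le {p n k : ℕ} (a b : ℕ → ℕ) (hp : 2 ≤ p) (hn : p ≤ n)
    (ha : ∀ i < k, 0 < a i ∧ a i ≤ p - 1) (hb : ∀ i < k, 0 < i → 0 < b i)
    (hsum : n = ∑ i ∈ range k, a i * p ^ b i) :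
    ∑ i ∈ range k, 2 * (a i - 1 + b i) ≤ n := by
  rcases k with _ | m
  · simp
  rw [sum_range_succ'] at hsum ⊢
  have htail : ∑ i ∈ range m, 2 * (a (i + 1) - 1 + b (i + 1)) + m * (p - 2) ≤
      ∑ i ∈ range m, a (i + 1) * p ^ b (i + 1) := by
    have hconst : ∑ _i ∈ range m, (p - 2) = m * (p - 2) := by simp
    rw [← hconst, ← sum_add_distrib]
    refine sum_le_sum fun i hi => ?_
    have hi := mem_range.mp hi
    exact two_mul_pred_add_add_sub_two_le_mul_pow hp (ha (i + 1) (by omega)).1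
      (hb (i + 1) (by omega) (by omega))
  have ha₀ := ha 0 (by omega)
  rcases Nat.eq_zero_or_pos (b 0) with hb₀ | hb₀
  · rw [hb₀] at hsum ⊢
    simp only [pow_zero, mul_one, add_zero] at hsum ⊢
    have hm : 1 ≤ m := by
      rcases m with _ | m
      · rw [sum_range_zero] at hsum
        omega
      · omega
    have hspare : p - 2 ≤ m * (p - 2) := Nat.le_mul_of_pos_left _ hm
    omega
  · have hhead := two_mul_pred_add_add_sub_two_le_mul_pow hp ha₀.1 hb₀
    omega

/-- Lemma 3.2 (conclusion): let `n = Σ_{i<k} a i * p ^ b i` be the base-`p` expansion of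
`n ≥ p` (so `0 < a i ≤ p - 1` and `b` strictly increasing).  Then
`Π_{i<k} (a i)! * p ^ (b i) ≤ p ^ (n/2)`, equivalently its square is at most `p ^ n`. -/
theorem base_p_centralizer_order_bound
    (p n k : ℕ) (a b : ℕ → ℕ) (hp : p.Prime) (hn : p ≤ n)
    (ha : ∀ i < k, 0 < a i ∧ a i ≤ p - 1)
    (hb : ∀ i j, i < j → j < k → b i < b j)
    (hsum : n = ∑ i ∈ Finset.range k, a i * p ^ b i) :
    (∏ i ∈ Finset.range k, (a i).factorial * p ^ b i) ^ 2 ≤ p ^ n := by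
  have hp2 := hp.two_le
  have hb_pos : ∀ i < k, 0 < i → 0 < b i := fun i hik hi =>
    Nat.lt_of_le_of_lt (Nat.zero_le _) (hb 0 i hi hik)
  calc (∏ i ∈ range k, (a i)! * p ^ b i) ^ 2
      ≤ ∏ i ∈ range k, p ^ (2 * (a i - 1 + b i)) := by
        rw [← prod_pow]
        refine prod_le_prod' fun i hi => sq_factorial_mul_pow_le _ ?_
        have hdigit := (ha i (mem_range.mp hi)).2
        omega
    _ = p ^ ∑ i ∈ range k, 2 * (a i - 1 + b i) := prod_pow_eq_pow_sum _ _ _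
    _ ≤ p ^ n := Nat.pow_le_pow_right (by omega)
        (sum_two_mul_pred_add_le a b hp2 hn ha hb_pos hsum)
end

section
/- Fix a prime p > 3 and a positive integer n ≥ 2, and write the base-p expansion of n as n = Σ_{i=1}^{k} a_i p^{b_i}, where 0 < a_i ≤ p-1 for each i and 0 ≤ b_1 < b_2 < ... < b_k. Then Π_{i=1}^{k} (a_i! · p^{b_i}) ≤ ((p-1)!)^((n-1)/(p-2)), where the right-hand side is a real power with exponent (n-1)/(p-2). -/
/-!
Raising both sides to the power `p - 2`, it suffices to show
`∏ (aᵢ! pᵇⁱ)^(p-2) ≤ ((p-1)!)^(n-1)`, and since `n - 1 ≥ ∑ (aᵢ pᵇⁱ - 1)` this can be done digit by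
digit: `(a! pᵇ)^(p-2) ≤ ((p-1)!)^(a pᵇ - 1)`. The factor `a!^(p-2) ≤ ((p-1)!)^(a-1)` is the
log-convexity of the factorial, and `p^(b(p-2)) ≤ ((p-1)!)^(pᵇ-1)` follows from `p ≤ (p-1)!` and
Bernoulli's inequality `1 + b(p-1) ≤ pᵇ`.
-/

open Nat Finset

namespace Nat

theorem factorial_le_pow_pred : ∀ n : ℕ, n ! ≤ n ^ (n - 1)
  | 0 => le_rfl
  | 1 => le_rfl
  | n + 2 =>
    calc (n + 2)! = (n + 2) * (n + 1)! := factorial_succ _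
      _ ≤ (n + 2) * (n + 1) ^ n := Nat.mul_le_mul_left _ (factorial_le_pow_pred (n + 1))
      _ ≤ (n + 2) * (n + 2) ^ n := Nat.mul_le_mul_left _ (Nat.pow_le_pow_left n.succ.le_succ _)
      _ = (n + 2) ^ (n + 2 - 1) := by rw [← pow_succ']; rfl

/-- `a ↦ (log a!) / (a - 1)` is monotone. -/
theorem factorial_pow_pred_le_factorial_pow_pred {a q : ℕ} (haq : a ≤ q) :
    a ! ^ (q - 1) ≤ q ! ^ (a - 1) := by
  rcases Nat.eq_zero_or_pos a with rfl | ha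
  · simp
  calc a ! ^ (q - 1) = a ! ^ (a - 1) * a ! ^ (q - a) := by rw [← pow_add]; congr 1; omega
    _ ≤ a ! ^ (a - 1) * (a ^ (a - 1)) ^ (q - a) :=
        Nat.mul_le_mul_left _ (Nat.pow_le_pow_left (factorial_le_pow_pred a) _)
    _ = (a ! * a ^ (q - a)) ^ (a - 1) := by ring
    _ ≤ q ! ^ (a - 1) := Nat.pow_le_pow_left (factorial_mul_pow_sub_le_factorial haq) _

end Nat

theorem pow_mul_sub_two_le_factorial_pow {p : ℕ} (hp : 4 ≤ p) (b : ℕ) :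
    p ^ (b * (p - 2)) ≤ (p - 1)! ^ (p ^ b - 1) := by
  have hp_le : p ≤ (p - 1)! := by
    have := lt_factorial_self (n := p - 1) (by omega)
    omega
  have bernoulli : 1 + b * (p - 1) ≤ p ^ b := by
    simpa [show 1 + (p - 1) = p by omega] using
      one_add_le_pow_of_two_add_nonneg (R := ℕ) (a := p - 1) (zero_le _) b
  calc p ^ (b * (p - 2)) ≤ (p - 1)! ^ (b * (p - 2)) := Nat.pow_le_pow_left hp_le _
    _ ≤ (p - 1)! ^ (p ^ b - 1) :=
        Nat.pow_le_pow_right (factorial_pos _) <| by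
          have := Nat.mul_le_mul_left b (show p - 2 ≤ p - 1 by omega)
          omega

theorem factorial_mul_pow_pow_le_factorial_pow {p a : ℕ} (hp : 4 ≤ p) (ha : 0 < a)
    (hap : a ≤ p - 1) (b : ℕ) :
    (a ! * p ^ b) ^ (p - 2) ≤ (p - 1)! ^ (a * p ^ b - 1) := by
  have hpb : 1 ≤ p ^ b := Nat.one_le_pow _ _ (by omega)
  have hexp : a - 1 + (p ^ b - 1) ≤ a * p ^ b - 1 := by
    have := Nat.mul_le_mul ha hpb
    have : a + p ^ b ≤ a * p ^ b + 1 := by nlinarith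
    omega
  have hdigit := factorial_pow_pred_le_factorial_pow_pred hap
  rw [show p - 1 - 1 = p - 2 by omega] at hdigit
  calc (a ! * p ^ b) ^ (p - 2) = a ! ^ (p - 2) * p ^ (b * (p - 2)) := by rw [mul_pow, pow_mul]
    _ ≤ (p - 1)! ^ (a - 1) * (p - 1)! ^ (p ^ b - 1) :=
        Nat.mul_le_mul hdigit (pow_mul_sub_two_le_factorial_pow hp b)
    _ ≤ (p - 1)! ^ (a * p ^ b - 1) := by
        rw [← pow_add]; exact Nat.pow_le_pow_right (factorial_pos _) hexp

theorem prod_factorial_mul_pow_pow_le {ι : Type*} {s : Finset ι} (hs : s.Nonempty) {p : ℕ}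
    (hp : 4 ≤ p) {a b : ι → ℕ} (ha : ∀ i ∈ s, 0 < a i ∧ a i ≤ p - 1) :
    (∏ i ∈ s, (a i)! * p ^ b i) ^ (p - 2) ≤ (p - 1)! ^ (∑ i ∈ s, a i * p ^ b i - 1) := by
  have hterm : ∀ i ∈ s, 1 ≤ a i * p ^ b i := fun i hi =>
    Nat.mul_le_mul (ha i hi).1 (Nat.one_le_pow _ _ (by omega))
  calc (∏ i ∈ s, (a i)! * p ^ b i) ^ (p - 2)
      = ∏ i ∈ s, ((a i)! * p ^ b i) ^ (p - 2) := (prod_pow _ _ _).symm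
    _ ≤ ∏ i ∈ s, (p - 1)! ^ (a i * p ^ b i - 1) :=
        prod_le_prod' fun i hi => factorial_mul_pow_pow_le_factorial_pow hp (ha i hi).1 (ha i hi).2 _
    _ = (p - 1)! ^ ∑ i ∈ s, (a i * p ^ b i - 1) := prod_pow_eq_pow_sum _ _ _
    _ ≤ (p - 1)! ^ (∑ i ∈ s, a i * p ^ b i - 1) := by
        refine Nat.pow_le_pow_right (factorial_pos _) ?_
        rw [sum_tsub_distrib _ hterm, sum_const, smul_eq_mul, mul_one]
        exact Nat.sub_le_sub_left (card_pos.2 hs) _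

theorem Real.le_rpow_div_of_pow_le {x y : ℝ} (hx : 0 ≤ x) (hy : 0 ≤ y) {m N : ℕ} (hm : m ≠ 0)
    (h : x ^ m ≤ y ^ N) : x ≤ y ^ ((N : ℝ) / m) := by
  rw [div_eq_mul_inv, Real.rpow_mul hy, Real.rpow_natCast,
    Real.le_rpow_inv_iff_of_pos hx (by positivity) (by positivity), Real.rpow_natCast]
  exact h

theorem base_p_centralizer_bound_large_p_general
    (p n k : ℕ) (a b : ℕ → ℕ) (hp3 : 3 < p) (hn : 2 ≤ n)
    (ha : ∀ i < k, 0 < a i ∧ a i ≤ p - 1)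
    (hsum : n = ∑ i ∈ Finset.range k, a i * p ^ b i) :
    ((∏ i ∈ Finset.range k, (a i).factorial * p ^ b i : ℕ) : ℝ) ≤
      ((Nat.factorial (p - 1) : ℝ)) ^ (((n : ℝ) - 1) / ((p : ℝ) - 2)) := by
  have hk : (range k).Nonempty := by
    rw [nonempty_range_iff]
    rintro rfl
    simp only [range_zero, sum_empty] at hsum
    omega
  have key := prod_factorial_mul_pow_pow_le hk hp3 (b := b) fun i hi => ha i (mem_range.1 hi)
  rw [← hsum] at key
  refine (Real.le_rpow_div_of_pow_le (m := p - 2) (N := n - 1) (Nat.cast_nonneg _)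
    (Nat.cast_nonneg _) (by omega) (by exact_mod_cast key)).trans_eq ?_
  rw [Nat.cast_sub (by omega), Nat.cast_sub (by omega), Nat.cast_one, Nat.cast_two]

/-- Lemma 6.1 (first part): fix a prime `p > 3` and `n ≥ 2` with base-`p` expansion
`n = Σ_{i<k} a i * p ^ b i` (so `0 < a i ≤ p - 1` and `b` strictly increasing).  Then
`Π_{i<k} (a i)! * p ^ (b i) ≤ ((p-1)!) ^ ((n-1)/(p-2))`, a real power. -/
theorem base_p_centralizer_bound_large_p
    (p n k : ℕ) (a b : ℕ → ℕ) (hp : p.Prime) (hp3 : 3 < p) (hn : 2 ≤ n)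
    (ha : ∀ i < k, 0 < a i ∧ a i ≤ p - 1)
    (hb : ∀ i j, i < j → j < k → b i < b j)
    (hsum : n = ∑ i ∈ Finset.range k, a i * p ^ b i) :
    ((∏ i ∈ Finset.range k, (a i).factorial * p ^ b i : ℕ) : ℝ) ≤
      ((Nat.factorial (p - 1) : ℝ)) ^ (((n : ℝ) - 1) / ((p : ℝ) - 2)) :=
  base_p_centralizer_bound_large_p_general p n k a b hp3 hn ha hsum
end

section
/- Fix a nonabelian finite simple group S, a positive integer t, a prime p, and a positive real number M. Set N := S^t (the direct product of t copies of S), and let ι_S : S → Aut(S) and ι_N : N → Aut(N) denote the injective conjugation homomorphisms. Suppose that for every automorphism α ∈ Aut(S), the coset ι_S(S)·α ⊆ Aut(S) contains an element x of p-power order whose orbit under conjugation by ι_S(S) has size at least M. Then for every element g ∈ Aut(N) of p-power order, the coset ι_N(N)·g ⊆ Aut(N) contains at least M^t elements of p-power order. -/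
/-!
Every automorphism of `N = S^t` permutes the simple factors, so it has the form
`v ↦ (i ↦ φ i (v (τ i)))` for a permutation `τ` and automorphisms `φ i` of `S`; when `g` is a
`p`-element, every point of `τ` has period a power of `p`. Fix a representative `r` on each
cycle of `τ`, of length `ℓ`. The cycle product `α_r = φ r * φ (τ r) * ⋯ * φ (τ^(ℓ-1) r)` governs
the powers of `g`, and replacing `g` by `conj w * g`, with `w` supported on the representatives,
replaces `α_r` by `conj (w r) * α_r`. Choosing `w r` so that this is the `p`-element with orbit of
size at least `M` given by the hypothesis makes `x = conj w * g` a `p`-element of the coset. A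
fixed point of `x` in `N` is determined by its values at the representatives, each fixed by the
new `α_r`, so `|C_N(x)| ≤ ∏_r |S| / M`. The `N`-conjugacy class of `x` lies in the coset,
consists of `p`-elements and has `|N| / |C_N(x)| ≥ M^t` elements.
-/

open Function Subgroup
open scoped commutatorElement

lemma Subgroup.center_eq_bot_of_isSimpleGroup {G : Type*} [Group G] [IsSimpleGroup G]
    (h : ∃ a b : G, a * b ≠ b * a) : center G = ⊥ := by
  refine (IsSimpleGroup.eq_bot_or_eq_top_of_normal _ inferInstance).resolve_right fun htop => ?_
  obtain ⟨a, b, hab⟩ := h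
  exact hab (mem_center_iff.mp (htop ▸ mem_top b) a)

lemma MulAut.conj_injective_of_center_eq_bot {G : Type*} [Group G] (h : center G = ⊥) :
    Injective (MulAut.conj : G →* MulAut G) := by
  refine (injective_iff_map_eq_one _).mpr fun z hz => ?_
  have hz' : z ∈ center G := mem_center_iff.mpr fun g =>
    (mul_inv_eq_iff_eq_mul.mp (DFunLike.congr_fun hz g)).symm
  rwa [h, mem_bot] at hz'

lemma Subgroup.center_pi_eq_bot {ι G : Type*} [Group G] (h : center G = ⊥) :
    center (ι → G) = ⊥ := by
  rw [Subgroup.center_pi, h, Subgroup.pi_bot]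

section InnerConjClass

variable {G : Type*} [Group G]

def innerConjClass (x : MulAut G) : Set (MulAut G) :=
  {y | ∃ s : G, y = MulAut.conj s * x * (MulAut.conj s)⁻¹}

lemma MulAut.mul_conj_mul_inv (x : MulAut G) (s : G) :
    x * MulAut.conj s * x⁻¹ = MulAut.conj (x s) := by
  ext; simp

lemma orderOf_eq_of_mem_innerConjClass {x y : MulAut G} (hy : y ∈ innerConjClass x) :
    orderOf y = orderOf x := by
  obtain ⟨s, rfl⟩ := hy
  exact (MulAut.conj (MulAut.conj s)).orderOf_eq x

lemma innerConjClass_conj_mul_subset (w : G) (g : MulAut G) :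
    innerConjClass (MulAut.conj w * g) ⊆ {y | ∃ v : G, y = MulAut.conj v * g} := by
  rintro _ ⟨v, rfl⟩
  refine ⟨v * w * g v⁻¹, ?_⟩
  rw [map_mul, map_mul, ← MulAut.mul_conj_mul_inv, map_inv]
  group

lemma card_innerConjClass_mul_card_fixedPoints [Finite G]
    (hG : Injective (MulAut.conj : G →* MulAut G)) (x : MulAut G) :
    Nat.card (innerConjClass x) * Nat.card (fixedPoints ⇑x) = Nat.card G := by
  let _ : MulAction G (MulAut G) :=
    MulAction.compHom _ (ConjAct.toConjAct.toMonoidHom.comp MulAut.conj)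
  have horbit : innerConjClass x = MulAction.orbit G x := by
    ext y
    simp [innerConjClass, MulAction.mem_orbit_iff, MulAction.compHom_smul_def, ConjAct.smul_def,
      eq_comm]
  have hstab : fixedPoints ⇑x = (MulAction.stabilizer G x : Set G) := by
    ext s
    simp only [mem_fixedPoints, IsFixedPt, SetLike.mem_coe, MulAction.mem_stabilizer_iff,
      MulAction.compHom_smul_def, ConjAct.smul_def, MonoidHom.comp_apply,
      MulEquiv.coe_toMonoidHom, ConjAct.ofConjAct_toConjAct]
    rw [← hG.eq_iff, ← MulAut.mul_conj_mul_inv, mul_inv_eq_iff_eq_mul, mul_inv_eq_iff_eq_mul,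
      eq_comm]
  rw [horbit, hstab, Nat.card_coe_set_eq, ← MulAction.index_stabilizer, SetLike.coe_sort_coe,
    Subgroup.index_mul_card]

lemma mul_card_fixedPoints_le [Finite G] (hG : Injective (MulAut.conj : G →* MulAut G))
    {x : MulAut G} {M : ℝ} (hM : M ≤ Nat.card (innerConjClass x)) :
    M * Nat.card (fixedPoints ⇑x) ≤ Nat.card G := by
  rw [← card_innerConjClass_mul_card_fixedPoints hG x, Nat.cast_mul]
  exact mul_le_mul_of_nonneg_right hM (Nat.cast_nonneg _)

end InnerConjClass

section PiFactor

variable {ι : Type*} [DecidableEq ι] (G : Type*) [Group G]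

def piFactor (i : ι) : Subgroup (ι → G) := (MonoidHom.mulSingle (fun _ => G) i).range

variable {G}

lemma mem_piFactor_iff {i : ι} {v : ι → G} : v ∈ piFactor G i ↔ ∀ j ≠ i, v j = 1 := by
  constructor
  · rintro ⟨s, rfl⟩ j hj
    exact Pi.mulSingle_eq_of_ne (M := fun _ => G) hj s
  · intro h
    refine ⟨v i, funext fun j => ?_⟩
    by_cases hj : j = i
    · subst hj; simp
    · simp [Pi.mulSingle_eq_of_ne hj, h j hj]

instance piFactor_normal (i : ι) : (piFactor G i).Normal :=
  ⟨fun v hv n => mem_piFactor_iff.mpr fun j hj => by simp [mem_piFactor_iff.mp hv j hj]⟩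

lemma card_piFactor (i : ι) : Nat.card (piFactor G i) = Nat.card G :=
  Nat.card_range_of_injective (Pi.mulSingle_injective (M := fun _ => G) i)

lemma piFactor_injective [Nontrivial G] : Injective (piFactor (ι := ι) G) := by
  intro i j h
  obtain ⟨s, hs⟩ := exists_ne (1 : G)
  by_contra hij
  have hmem : Pi.mulSingle i s ∈ piFactor G j := h ▸ ⟨s, rfl⟩
  exact hs (by simpa using mem_piFactor_iff.mp hmem i hij)

lemma exists_piFactor_le [IsSimpleGroup G] (hG : center G = ⊥) {K : Subgroup (ι → G)}
    (hK : K.Normal) (hne : K ≠ ⊥) : ∃ i, piFactor G i ≤ K := by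
  obtain ⟨⟨k, hkK⟩, hk⟩ := ne_bot_iff_exists_ne_one.mp hne
  obtain ⟨i, hi⟩ : ∃ i, k i ≠ 1 := by
    by_contra! h
    exact hk (Subtype.ext (funext h))
  obtain ⟨s, hs⟩ : ∃ s, ⁅s, k i⁆ ≠ 1 := by
    by_contra! h
    have : k i ∈ center G := mem_center_iff.mpr fun s =>
      commutatorElement_eq_one_iff_mul_comm.mp (h s)
    exact hi (by rwa [hG, mem_bot] at this)
  have hcomm : ⁅(Pi.mulSingle i s : ι → G), k⁆ = Pi.mulSingle i ⁅s, k i⁆ := by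
    funext j
    by_cases hj : j = i
    · subst hj; simp [commutatorElement_def]
    · simp [commutatorElement_def, Pi.mulSingle_eq_of_ne hj]
  have hmem : ⁅s, k i⁆ ∈ K.comap (MonoidHom.mulSingle (fun _ => G) i) := by
    rw [mem_comap, MonoidHom.mulSingle_apply, ← hcomm, commutatorElement_def]
    exact K.mul_mem (hK.conj_mem k hkK _) (K.inv_mem hkK)
  have htop : K.comap (MonoidHom.mulSingle (fun _ => G) i) = ⊤ :=
    (IsSimpleGroup.eq_bot_or_eq_top_of_normal _ (hK.comap _)).resolve_left fun h =>
      hs (by rwa [h, mem_bot] at hmem)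
  exact ⟨i, by rw [piFactor, MonoidHom.range_eq_map, map_le_iff_le_comap, htop]⟩

variable [Finite ι] [Finite G] [IsSimpleGroup G]

lemma exists_map_piFactor_eq (hG : center G = ⊥) (g : MulAut (ι → G)) (j : ι) :
    ∃ i, (piFactor G j).map g.toMonoidHom = piFactor G i := by
  have hne : (piFactor G j).map g.toMonoidHom ≠ ⊥ := by
    intro h
    have hcard := card_piFactor (G := G) j
    rw [map_eq_bot_iff_of_injective _ g.injective] at h
    rw [h, card_bot] at hcard
    exact Finite.one_lt_card.ne hcard
  obtain ⟨i, hi⟩ := exists_piFactor_le hG ((piFactor_normal j).map _ g.surjective) hne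
  refine ⟨i, (eq_of_le_of_card_ge hi ?_).symm⟩
  rw [card_map_of_injective g.injective, card_piFactor, card_piFactor]

lemma MulAut.exists_perm_apply_pi (hG : center G = ⊥) (g : MulAut (ι → G)) :
    ∃ (τ : Equiv.Perm ι) (a : ι → MulAut G), ∀ v i, g v i = a i (v (τ i)) := by
  choose σ hσ using exists_map_piFactor_eq hG g
  have hσinj : Injective σ := fun j j' h =>
    piFactor_injective (G := G) (map_injective g.injective (by rw [hσ, hσ, h]))
  set e := Equiv.ofBijective σ (Finite.injective_iff_bijective.mp hσinj)
  have hmem : ∀ j s, g (Pi.mulSingle j s) ∈ piFactor G (e j) := fun j s =>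
    hσ j ▸ mem_map_of_mem _ ⟨s, rfl⟩
  have hoff : ∀ j s i, e j ≠ i → g (Pi.mulSingle j s) i = 1 := fun j s i h =>
    mem_piFactor_iff.mp (hmem j s) i (Ne.symm h)
  let f (i : ι) : G →* G := (Pi.evalMonoidHom _ i).comp
    (g.toMonoidHom.comp (MonoidHom.mulSingle (fun _ => G) (e.symm i)))
  have hinj : ∀ i, Injective (f i) := by
    refine fun i => (injective_iff_map_eq_one _).mpr fun s hs => ?_
    have : g (Pi.mulSingle (e.symm i) s) = 1 := funext fun j => by
      by_cases hj : j = i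
      · subst hj; exact hs
      · exact hoff _ _ _ (by simpa [eq_comm] using hj)
    simpa using this
  refine ⟨e.symm, fun i => MulEquiv.ofBijective (f i) (Finite.injective_iff_bijective.mp (hinj i)),
    fun v i => ?_⟩
  refine DFunLike.congr_fun (MonoidHom.pi_ext (f := (Pi.evalMonoidHom _ i).comp g.toMonoidHom)
    (g := (f i).comp (Pi.evalMonoidHom _ (e.symm i))) fun k s => ?_) v
  by_cases hk : k = e.symm i
  · subst hk; simp [f]
  · have hk' : e k ≠ i := fun h => hk (by rw [← h, Equiv.symm_apply_apply])
    simp [hoff _ _ _ hk', Pi.mulSingle_eq_of_ne (Ne.symm hk)]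

end PiFactor

section OrbitProd

variable {ι M : Type*} [Monoid M] (f : ι → ι) (a : ι → M)

def orbitProd : ℕ → ι → M
  | 0, _ => 1
  | n + 1, i => a i * orbitProd n (f i)

@[simp] lemma orbitProd_zero (i : ι) : orbitProd f a 0 i = 1 := rfl

lemma orbitProd_succ (n : ℕ) (i : ι) : orbitProd f a (n + 1) i = a i * orbitProd f a n (f i) :=
  rfl

lemma orbitProd_add (m n : ℕ) (i : ι) :
    orbitProd f a (m + n) i = orbitProd f a m i * orbitProd f a n (f^[m] i) := by
  induction m generalizing i with
  | zero => simp
  | succ m ih => rw [Nat.add_right_comm, orbitProd_succ, ih, orbitProd_succ, mul_assoc]; rfl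

variable {f a}

lemma orbitProd_congr {a' : ι → M} {n : ℕ} {i : ι} (h : ∀ k < n, a' (f^[k] i) = a (f^[k] i)) :
    orbitProd f a' n i = orbitProd f a n i := by
  induction n generalizing i with
  | zero => rfl
  | succ n ih =>
    rw [orbitProd_succ, orbitProd_succ, ih fun k hk => h (k + 1) (by omega)]
    exact congrArg (· * _) (h 0 n.succ_pos)

lemma Function.IsPeriodicPt.orbitProd_mul {ℓ : ℕ} {i : ι} (h : IsPeriodicPt f ℓ i) (n : ℕ) :
    orbitProd f a (ℓ * n) i = orbitProd f a ℓ i ^ n := by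
  induction n with
  | zero => simp
  | succ n ih => rw [mul_add_one, orbitProd_add, (h.mul_const n).eq, ih, pow_succ]

end OrbitProd

section OrbitProdGroup

variable {ι G : Type*} [Group G] {f : ι → ι} {a : ι → G}

lemma Function.IsPeriodicPt.isConj_orbitProd_apply {ℓ : ℕ} {i : ι} (h : IsPeriodicPt f ℓ i) :
    IsConj (orbitProd f a ℓ i) (orbitProd f a ℓ (f i)) := by
  have key : a i * orbitProd f a ℓ (f i) = orbitProd f a ℓ i * a i := by
    rw [← orbitProd_succ, orbitProd_add, h.eq, orbitProd_succ, orbitProd_zero, mul_one]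
  exact isConj_iff.mpr ⟨(a i)⁻¹, by rw [inv_inv, mul_assoc, ← key, inv_mul_cancel_left]⟩

lemma Function.IsPeriodicPt.isConj_orbitProd_iterate {ℓ : ℕ} {i : ι} (h : IsPeriodicPt f ℓ i)
    (k : ℕ) :
    IsConj (orbitProd f a ℓ i) (orbitProd f a ℓ (f^[k] i)) := by
  induction k with
  | zero => exact IsConj.refl _
  | succ k ih =>
    rw [iterate_succ_apply']
    exact ih.trans (h.apply_iterate k).isConj_orbitProd_apply

end OrbitProdGroup

section MonomialAut

variable {ι G : Type*} [Group G] {x : MulAut (ι → G)} {τ : ι → ι} {a : ι → MulAut G}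

lemma pow_apply_eq_orbitProd (hx : ∀ v i, x v i = a i (v (τ i))) (n : ℕ) (v : ι → G) (i : ι) :
    (x ^ n) v i = orbitProd τ a n i (v (τ^[n] i)) := by
  induction n generalizing i with
  | zero => rfl
  | succ n ih => rw [pow_succ', MulAut.mul_apply, hx, ih, orbitProd_succ, MulAut.mul_apply]; rfl

lemma isPeriodicPt_of_pow_eq_one [DecidableEq ι] [Nontrivial G]
    (hx : ∀ v i, x v i = a i (v (τ i))) {n : ℕ} (hn : x ^ n = 1) (i : ι) :
    IsPeriodicPt τ n i := by
  by_contra hne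
  obtain ⟨s, hs⟩ := exists_ne (1 : G)
  have h := pow_apply_eq_orbitProd hx n (Pi.mulSingle (τ^[n] i) s) i
  rw [hn, MulAut.one_apply, Pi.mulSingle_eq_of_ne (Ne.symm hne), Pi.mulSingle_eq_same] at h
  exact hs ((map_eq_one_iff _ (orbitProd τ a n i).injective).mp h.symm)

lemma apply_eq_orbitProd_of_isFixedPt (hx : ∀ v i, x v i = a i (v (τ i))) {v : ι → G}
    (hv : IsFixedPt x v) (n : ℕ) (i : ι) : v i = orbitProd τ a n i (v (τ^[n] i)) := by
  have hvn : (x ^ n) v = v := by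
    induction n with
    | zero => rfl
    | succ n ih => rw [pow_succ, MulAut.mul_apply, hv.eq, ih]
  rw [← pow_apply_eq_orbitProd hx, hvn]

lemma card_fixedPoints_le_prod [Finite G] (hx : ∀ v i, x v i = a i (v (τ i))) (R : Finset ι)
    (hR : ∀ i, ∃ n, τ^[n] i ∈ R) :
    Nat.card (fixedPoints ⇑x) ≤
      ∏ r ∈ R, Nat.card (fixedPoints ⇑(orbitProd τ a (minimalPeriod τ r) r)) := by
  let restrict (v : fixedPoints ⇑x) (r : R) :
      fixedPoints ⇑(orbitProd τ a (minimalPeriod τ r) r) :=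
    ⟨v.1 r, by
      have := apply_eq_orbitProd_of_isFixedPt hx v.2 (minimalPeriod τ r) r
      rwa [iterate_minimalPeriod, eq_comm] at this⟩
  have hinj : Injective restrict := by
    intro v w h
    refine Subtype.ext (funext fun i => ?_)
    obtain ⟨n, hn⟩ := hR i
    rw [apply_eq_orbitProd_of_isFixedPt hx v.2 n i, apply_eq_orbitProd_of_isFixedPt hx w.2 n i]
    exact congrArg _ (congrArg Subtype.val (congrFun h ⟨_, hn⟩))
  rw [← Finset.prod_coe_sort, ← Nat.card_pi]
  exact Nat.card_le_card_of_injective restrict hinj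

lemma exists_pow_prime_pow_eq_one [Finite ι] (hx : ∀ v i, x v i = a i (v (τ i))) {p L : ℕ}
    (hL : ∀ i, IsPeriodicPt τ (p ^ L) i) (R : Finset ι) (hR : ∀ i, ∃ n, τ^[n] i ∈ R)
    (hpR : ∀ r ∈ R, ∃ k, orbitProd τ a (minimalPeriod τ r) r ^ p ^ k = 1) :
    ∃ k, x ^ p ^ k = 1 := by
  have hcycle : ∀ i, ∃ k, orbitProd τ a (p ^ L) i ^ p ^ k = 1 := by
    intro i
    obtain ⟨n, hn⟩ := hR i
    obtain ⟨k, hk⟩ := hpR _ hn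
    obtain ⟨d, hd⟩ := IsPeriodicPt.minimalPeriod_dvd (hL (τ^[n] i))
    have hr : orbitProd τ a (p ^ L) (τ^[n] i) ^ p ^ k = 1 := by
      rw [hd, (isPeriodicPt_minimalPeriod τ _).orbitProd_mul, ← pow_mul, mul_comm, pow_mul, hk,
        one_pow]
    have hconj := ((hL i).isConj_orbitProd_iterate (a := a) n).pow (p ^ k)
    rw [hr] at hconj
    exact ⟨k, isConj_one_left.mp hconj⟩
  choose k hk using hcycle
  obtain ⟨K, hK⟩ := (Set.finite_range k).bddAbove
  refine ⟨L + K, MulEquiv.ext fun v => funext fun i => ?_⟩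
  have hKi : orbitProd τ a (p ^ L) i ^ p ^ K = 1 := by
    rw [← Nat.sub_add_cancel (hK ⟨i, rfl⟩), pow_add, pow_mul', hk, one_pow]
  rw [pow_add, pow_apply_eq_orbitProd hx, (hL i).orbitProd_mul, ((hL i).mul_const _).eq, hKi,
    MulAut.one_apply, MulAut.one_apply]

end MonomialAut

lemma Equiv.Perm.exists_cycle_transversal {ι : Type*} [Finite ι] (τ : Equiv.Perm ι) :
    ∃ R : Finset ι, (∀ i, ∃ n, τ^[n] i ∈ R) ∧
      ∀ r ∈ R, ∀ k, 0 < k → k < minimalPeriod τ r → τ^[k] r ∉ R := by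
  classical
  have := Fintype.ofFinite ι
  let rep (i : ι) : ι := (Quotient.mk (SameCycle.setoid τ) i).out
  have hrep : ∀ i, τ.SameCycle i (rep i) := fun i =>
    (Quotient.mk_out (s := SameCycle.setoid τ) i).symm
  have hrep_eq : ∀ i j, τ.SameCycle i j → rep i = rep j := fun i j h =>
    congrArg Quotient.out (Quotient.sound h)
  have hfix : ∀ r ∈ Finset.univ.image rep, rep r = r := by
    simp only [Finset.mem_image, Finset.mem_univ, true_and, forall_exists_index]
    rintro _ i rfl
    exact (hrep_eq _ _ (hrep i)).symm
  refine ⟨Finset.univ.image rep, fun i => ?_, fun r hr k hk hkr hmem => ?_⟩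
  · obtain ⟨n, hn⟩ := (hrep i).exists_nat_pow_eq
    exact ⟨n, by rw [iterate_eq_pow, hn]; exact Finset.mem_image_of_mem _ (Finset.mem_univ i)⟩
  · have hsame : τ.SameCycle r (τ^[k] r) := by
      rw [iterate_eq_pow]; exact (sameCycle_pow_right.mpr (SameCycle.refl _ _))
    refine not_isPeriodicPt_of_pos_of_lt_minimalPeriod hk.ne' hkr ?_
    show τ^[k] r = r
    rw [← hfix _ hmem, ← hrep_eq _ _ hsame, hfix _ hr]

lemma pow_mul_prod_le_pow {ι : Type*} {R : Finset ι} {F : ι → ℝ} {M A : ℝ} {n : ℕ}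
    (hM : 0 ≤ M) (hMA : M ≤ A) (hR : R.card ≤ n) (hF : ∀ r ∈ R, 0 ≤ F r ∧ M * F r ≤ A) :
    M ^ n * ∏ r ∈ R, F r ≤ A ^ n := by
  calc M ^ n * ∏ r ∈ R, F r = M ^ (n - R.card) * ∏ r ∈ R, (M * F r) := by
        rw [Finset.prod_mul_distrib, Finset.prod_const, ← mul_assoc, ← pow_add,
          Nat.sub_add_cancel hR]
    _ ≤ A ^ (n - R.card) * ∏ _r ∈ R, A := by
        have hMF : ∀ r ∈ R, 0 ≤ M * F r := fun r hr => mul_nonneg hM (hF r hr).1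
        exact mul_le_mul (pow_le_pow_left₀ hM hMA _)
          (Finset.prod_le_prod hMF fun r hr => (hF r hr).2) (Finset.prod_nonneg hMF)
          (pow_nonneg (hM.trans hMA) _)
    _ = A ^ n := by rw [Finset.prod_const, ← pow_add, Nat.sub_add_cancel hR]

lemma exists_conj_mul_pow_eq_one_and_card_fixedPoints_le {ι G : Type*} [Fintype ι] [Group G]
    [Finite G] {p : ℕ} {M : ℝ} (hM : 0 ≤ M)
    (hG : ∀ α : MulAut G, ∃ s : G, (∃ k, (MulAut.conj s * α) ^ p ^ k = 1) ∧
      M * Nat.card (fixedPoints ⇑(MulAut.conj s * α)) ≤ Nat.card G)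
    {g : MulAut (ι → G)} {τ : Equiv.Perm ι} {φ : ι → MulAut G}
    (hg : ∀ v i, g v i = φ i (v (τ i))) {L : ℕ} (hL : ∀ i, IsPeriodicPt τ (p ^ L) i) :
    ∃ w : ι → G, (∃ k, (MulAut.conj w * g) ^ p ^ k = 1) ∧
      M ^ Fintype.card ι * Nat.card (fixedPoints ⇑(MulAut.conj w * g)) ≤
        (Nat.card G : ℝ) ^ Fintype.card ι := by
  obtain ⟨R, hR, hR_sep⟩ := τ.exists_cycle_transversal
  choose s hs_pow hs_card using fun i => hG (orbitProd τ φ (minimalPeriod τ i) i)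
  set w : ι → G := (R : Set ι).mulIndicator s
  set a : ι → MulAut G := fun i => MulAut.conj (w i) * φ i
  have hx : ∀ v i, (MulAut.conj w * g) v i = a i (v (τ i)) := by
    intro v i
    simp [a, hg]
  have hrep : ∀ r ∈ R, orbitProd τ a (minimalPeriod τ r) r =
      MulAut.conj (s r) * orbitProd τ φ (minimalPeriod τ r) r := by
    intro r hr
    obtain ⟨m, hm⟩ := Nat.exists_eq_succ_of_ne_zero
      (minimalPeriod_pos_of_mem_periodicPts (τ.injective.mem_periodicPts r)).ne'
    have htail : ∀ k < m, a (τ^[k] (τ r)) = φ (τ^[k] (τ r)) := fun k hk => by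
      have hk' : τ^[k] (τ r) ∉ R := hR_sep r hr (k + 1) k.succ_pos (by omega)
      simp [a, w, Set.mulIndicator_of_notMem (Finset.mem_coe.not.mpr hk')]
    rw [hm, orbitProd_succ, orbitProd_succ, orbitProd_congr htail, ← mul_assoc]
    simp [a, w, Set.mulIndicator_of_mem (Finset.mem_coe.mpr hr)]
  have hMG : M ≤ Nat.card G := by
    obtain ⟨s₀, -, h₀⟩ := hG 1
    have : Nonempty (fixedPoints ⇑(MulAut.conj s₀ * 1)) := ⟨⟨1, map_one _⟩⟩
    exact (le_mul_of_one_le_right hM (Nat.one_le_cast.mpr Nat.card_pos)).trans h₀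
  have hfix := card_fixedPoints_le_prod hx R hR
  rw [Finset.prod_congr rfl fun r hr =>
    congrArg (fun y : MulAut G => Nat.card (fixedPoints ⇑y)) (hrep r hr)] at hfix
  refine ⟨w, exists_pow_prime_pow_eq_one hx hL R hR fun r hr => hrep r hr ▸ hs_pow r, ?_⟩
  calc _ ≤ M ^ Fintype.card ι * ∏ r ∈ R, (Nat.card (fixedPoints
          ⇑(MulAut.conj (s r) * orbitProd τ φ (minimalPeriod τ r) r)) : ℝ) := by
        gcongr
        exact_mod_cast hfix
    _ ≤ _ := pow_mul_prod_le_pow hM hMG R.card_le_univ fun r _ => ⟨Nat.cast_nonneg _, hs_card r⟩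

theorem coset_p_elements_in_aut_of_direct_power_general
    (S : Type*) [Group S] [Finite S] [IsSimpleGroup S]
    (hnab : ∃ a b : S, a * b ≠ b * a)
    (t : ℕ) (p : ℕ) (hp : p.Prime) (M : ℝ) (hM : 0 < M)
    (hS : ∀ α : MulAut S, ∃ x : MulAut S,
      (∃ s : S, x = MulAut.conj s * α) ∧ (∃ k : ℕ, orderOf x = p ^ k) ∧
      M ≤ (Nat.card {y : MulAut S | ∃ s : S, y = MulAut.conj s * x * (MulAut.conj s)⁻¹} : ℝ)) :
    ∀ g : MulAut (Fin t → S), (∃ k : ℕ, orderOf g = p ^ k) →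
      M ^ t ≤ (Nat.card {x : MulAut (Fin t → S) |
        (∃ v : Fin t → S, x = MulAut.conj v * g) ∧ ∃ k : ℕ, orderOf x = p ^ k} : ℝ) := by
  have := Fact.mk hp
  rintro g ⟨k, hk⟩
  have hcenter := Subgroup.center_eq_bot_of_isSimpleGroup hnab
  have hS' : ∀ α : MulAut S, ∃ s : S, (∃ k, (MulAut.conj s * α) ^ p ^ k = 1) ∧
      M * Nat.card (fixedPoints ⇑(MulAut.conj s * α)) ≤ Nat.card S := fun α => by
    obtain ⟨_, ⟨s, rfl⟩, hx_ord, hx_card⟩ := hS α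
    exact ⟨s, exists_orderOf_eq_prime_pow_iff.mp hx_ord,
      mul_card_fixedPoints_le (MulAut.conj_injective_of_center_eq_bot hcenter) hx_card⟩
  obtain ⟨τ, φ, hg⟩ := MulAut.exists_perm_apply_pi hcenter g
  obtain ⟨w, hw_pow, hw_card⟩ := exists_conj_mul_pow_eq_one_and_card_fixedPoints_le hM.le hS' hg
    (isPeriodicPt_of_pow_eq_one hg (by rw [← hk, pow_orderOf_eq_one]))
  set x := MulAut.conj w * g
  obtain ⟨j, hj⟩ := exists_orderOf_eq_prime_pow_iff.mpr hw_pow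
  have hclass : innerConjClass x ⊆ {y : MulAut (Fin t → S) |
      (∃ v : Fin t → S, y = MulAut.conj v * g) ∧ ∃ k : ℕ, orderOf y = p ^ k} := fun y hy =>
    ⟨innerConjClass_conj_mul_subset w g hy, j, (orderOf_eq_of_mem_innerConjClass hy).trans hj⟩
  have : Nonempty (fixedPoints ⇑x) := ⟨⟨1, map_one _⟩⟩
  refine le_trans ?_ (Nat.cast_le.mpr (Nat.card_mono (Set.toFinite _) hclass))
  refine le_of_mul_le_mul_right ?_ (Nat.cast_pos.mpr (Nat.card_pos (α := fixedPoints ⇑x)))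
  rw [← Nat.cast_mul, card_innerConjClass_mul_card_fixedPoints
    (MulAut.conj_injective_of_center_eq_bot (Subgroup.center_pi_eq_bot hcenter)),
    Nat.card_fun, Nat.card_fin]
  simpa using hw_card

/-- Lemma 2.2: let `S` be a nonabelian finite simple group, `t ≥ 1`, `p` a prime, and
`M > 0` a real number.  Suppose that for every `α ∈ Aut(S)` the coset `ι_S(S)·α` contains
an element `x` of `p`-power order whose orbit under conjugation by inner automorphisms has
size at least `M`.  Then for every `p`-element `g` of `Aut(S^t)`, the coset `ι_N(N)·g`
(where `N = S^t`) contains at least `M^t` elements of `p`-power order. -/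
theorem coset_p_elements_in_aut_of_direct_power
    (S : Type*) [Group S] [Finite S] [IsSimpleGroup S]
    (hnab : ∃ a b : S, a * b ≠ b * a)
    (t : ℕ) (ht : 0 < t) (p : ℕ) (hp : p.Prime) (M : ℝ) (hM : 0 < M)
    (hS : ∀ α : MulAut S, ∃ x : MulAut S,
      (∃ s : S, x = MulAut.conj s * α) ∧ (∃ k : ℕ, orderOf x = p ^ k) ∧
      M ≤ (Nat.card {y : MulAut S | ∃ s : S, y = MulAut.conj s * x * (MulAut.conj s)⁻¹} : ℝ)) :
    ∀ g : MulAut (Fin t → S), (∃ k : ℕ, orderOf g = p ^ k) →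
      M ^ t ≤ (Nat.card {x : MulAut (Fin t → S) |
        (∃ v : Fin t → S, x = MulAut.conj v * g) ∧ ∃ k : ℕ, orderOf x = p ^ k} : ℝ) :=
  coset_p_elements_in_aut_of_direct_power_general S hnab t p hp M hM hS
end

section
/- Let q ≥ 2, s ≥ 2 and t ≥ 1 be integers. Suppose that it is not the case that s = t = 2, and not the case that q = s = 2 and t = 3. Then ((q^s - 1)/(q - 1))^t · q^(t-1) ≤ (q^(s^t) - 1)/(q - 1). -/
lemma my_pow_sub_one_le (x b : ℕ) (hx : 1 ≤ x) (hb : 1 ≤ b) :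
    (x - 1) * x ^ (b - 1) ≤ x ^ b - 1 := by
  obtain ⟨c, rfl⟩ : ∃ c, b = c + 1 := ⟨b - 1, (Nat.succ_pred_eq_of_pos hb).symm⟩
  simp only [Nat.add_sub_cancel]
  have h1 : 1 ≤ x ^ c := Nat.one_le_pow _ _ (by omega)
  have : (x - 1) * x ^ c = x ^ (c+1) - x ^ c := by
    rw [Nat.sub_mul, one_mul, pow_succ, mul_comm]
  rw [this]
  exact Nat.sub_le_sub_left h1 _

lemma my_step (q s t : ℕ) (hq : 2 ≤ q) (hs : 2 ≤ s) (ht : 1 ≤ t)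
    (hexp : s + 1 ≤ s ^ t * (s - 1))
    (ih : (q ^ s - 1) ^ t * q ^ (t - 1) * (q - 1) ≤ (q ^ (s ^ t) - 1) * (q - 1) ^ t) :
    (q ^ s - 1) ^ (t+1) * q ^ t * (q - 1) ≤ (q ^ (s ^ (t+1)) - 1) * (q - 1) ^ (t+1) := by
  have hq1 : 1 ≤ q := by omega
  have key1 : (q ^ s - 1) * q ≤ q ^ (s ^ t * (s - 1)) * (q - 1) := by
    calc (q ^ s - 1) * q = q ^ s * q - q := by rw [Nat.sub_mul, one_mul]
      _ ≤ q ^ (s + 1) := by rw [← pow_succ]; omega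
      _ ≤ q ^ (s ^ t * (s - 1)) := Nat.pow_le_pow_right hq1 hexp
      _ ≤ q ^ (s ^ t * (s - 1)) * (q - 1) := Nat.le_mul_of_pos_right _ (by omega)
  have key2 : (q ^ (s ^ t) - 1) * q ^ (s ^ t * (s - 1)) ≤ q ^ (s ^ (t+1)) - 1 := by
    have := my_pow_sub_one_le (q ^ (s ^ t)) s (Nat.one_le_pow _ _ (by omega)) (by omega)
    rwa [← pow_mul, ← pow_mul, ← pow_succ, Nat.mul_sub_one,
      show s ^ t * s - s ^ t = s ^ t * (s - 1) by rw [Nat.mul_sub_one]] at this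
  obtain ⟨u, rfl⟩ : ∃ u, t = u + 1 := ⟨t - 1, (Nat.succ_pred_eq_of_pos ht).symm⟩
  simp only [Nat.add_sub_cancel] at ih
  calc (q ^ s - 1) ^ (u+1+1) * q ^ (u+1) * (q - 1)
      = ((q ^ s - 1) ^ (u+1) * q ^ u * (q - 1)) * ((q ^ s - 1) * q) := by ring
    _ ≤ ((q ^ (s ^ (u+1)) - 1) * (q - 1) ^ (u+1)) * ((q ^ s - 1) * q) :=
        Nat.mul_le_mul_right _ ih
    _ ≤ ((q ^ (s ^ (u+1)) - 1) * (q - 1) ^ (u+1)) * (q ^ (s ^ (u+1) * (s - 1)) * (q - 1)) :=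
        Nat.mul_le_mul_left _ key1
    _ = ((q ^ (s ^ (u+1)) - 1) * q ^ (s ^ (u+1) * (s - 1))) * ((q - 1) ^ (u+1) * (q - 1)) := by
        ring
    _ ≤ (q ^ (s ^ (u+1+1)) - 1) * ((q - 1) ^ (u+1) * (q - 1)) := Nat.mul_le_mul_right _ key2
    _ = (q ^ (s ^ (u+1+1)) - 1) * (q - 1) ^ (u+1+1) := by ring

lemma my_base_s2_t3 (q : ℕ) (hq : 2 ≤ q) :
    (q ^ 2 - 1) ^ 3 * q ^ 2 * (q - 1) ≤ (q ^ 8 - 1) * (q - 1) ^ 3 := by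
  have h1 : 1 ≤ q ^ 2 := Nat.one_le_two_pow.trans (Nat.pow_le_pow_left hq 2)
  have h8 : 1 ≤ q ^ 8 := Nat.one_le_two_pow.trans (Nat.pow_le_pow_left hq 8)
  have h0 : 1 ≤ q := by omega
  zify [h1, h8, h0]
  have hq' : (2:ℤ) ≤ (q:ℤ) := by exact_mod_cast hq
  have hqn : (0:ℤ) ≤ (q:ℤ) := by linarith
  have key : ((q:ℤ)-1)*((q:ℤ)+1)^3*(q:ℤ)^2 ≤ (q:ℤ)^8 - 1 := by
    nlinarith [mul_nonneg (sub_nonneg.mpr hq') (pow_nonneg hqn 7),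
      mul_nonneg (sub_nonneg.mpr hq') (pow_nonneg hqn 6),
      mul_nonneg (sub_nonneg.mpr hq') (pow_nonneg hqn 5),
      pow_nonneg hqn 3, pow_nonneg hqn 2,
      mul_nonneg (mul_nonneg (sub_nonneg.mpr hq') (sub_nonneg.mpr hq')) (pow_nonneg hqn 6)]
  have h3 : (0:ℤ) ≤ ((q:ℤ)-1)^3 := pow_nonneg (by linarith) 3
  calc ((q:ℤ)^2-1)^3 * (q:ℤ)^2 * ((q:ℤ)-1)
      = ((q:ℤ)-1)^3 * (((q:ℤ)-1)*((q:ℤ)+1)^3*(q:ℤ)^2) := by ring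
    _ ≤ ((q:ℤ)-1)^3 * ((q:ℤ)^8-1) := mul_le_mul_of_nonneg_left key h3
    _ = ((q:ℤ)^8-1) * ((q:ℤ)-1)^3 := by ring

/-- For integers `q ≥ 2`, `s ≥ 2`, `t ≥ 1`, excluding the cases `s = t = 2` and
`q = s = 2, t = 3`, one has `((q^s - 1)/(q - 1))^t * q^(t-1) ≤ (q^(s^t) - 1)/(q - 1)`,
stated with denominators cleared over `ℕ`. -/
theorem geom_sum_power_inequality
    (q s t : ℕ) (hq : 2 ≤ q) (hs : 2 ≤ s) (ht : 1 ≤ t)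
    (h1 : ¬ (s = 2 ∧ t = 2)) (h2 : ¬ (q = 2 ∧ s = 2 ∧ t = 3)) :
    (q ^ s - 1) ^ t * q ^ (t - 1) * (q - 1) ≤ (q ^ (s ^ t) - 1) * (q - 1) ^ t := by
  have hs1 : 1 ≤ s := by omega
  have hexp2 : ∀ t', 2 ≤ t' → s + 1 ≤ s ^ t' * (s - 1) := by
    intro t' ht'
    calc s + 1 ≤ s * s := by nlinarith
      _ = s ^ 2 := (sq s).symm
      _ ≤ s ^ t' := Nat.pow_le_pow_right hs1 ht'
      _ ≤ s ^ t' * (s - 1) := Nat.le_mul_of_pos_right _ (by omega)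
  have base1 : (q ^ s - 1) ^ 1 * q ^ (1 - 1) * (q - 1) ≤ (q ^ (s ^ 1) - 1) * (q - 1) ^ 1 := by
    simp
  have step2 : 3 ≤ s →
      (q ^ s - 1) ^ 2 * q ^ (2 - 1) * (q - 1) ≤ (q ^ (s ^ 2) - 1) * (q - 1) ^ 2 := by
    intro hs3
    have hexp1 : s + 1 ≤ s ^ 1 * (s - 1) := by
      rw [pow_one]
      calc s + 1 ≤ s * 2 := by omega
        _ ≤ s * (s - 1) := Nat.mul_le_mul_left _ (by omega)
    exact my_step q s 1 hq hs le_rfl hexp1 base1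
  have h3all : ∀ t', 3 ≤ t' →
      (q ^ s - 1) ^ t' * q ^ (t' - 1) * (q - 1) ≤ (q ^ (s ^ t') - 1) * (q - 1) ^ t' := by
    intro t' ht'
    induction t', ht' using Nat.le_induction with
    | base =>
      by_cases hs2 : s = 2
      · subst hs2
        have := my_base_s2_t3 q hq
        norm_num
        norm_num at this
        exact this
      · exact my_step q s 2 hq hs (by omega) (hexp2 2 le_rfl) (step2 (by omega))
    | succ n hn ih =>
      exact my_step q s n hq hs (by omega) (hexp2 n (by omega)) ih
  rcases Nat.lt_or_ge t 3 with h | h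
  · interval_cases t
    · exact base1
    · exact step2 (by omega)
  · exact h3all t h
end

section
/- Let m and t be positive integers and let q be a power of the prime 2. Then (m_{2'} · (q^m - 1))^t · h_2(t) ≤ (3(q^3 - 1))^(mt/3) · h_2(mt/3), where m_{2'} is the largest odd divisor of m, h_2(x) := 3^((x-1)/2), and the exponents mt/3 and (mt/3 - 1)/2 are real numbers. -/
/-- `h_p(x)` from the paper: `3^((x-1)/2)` if `p = 2`, `20^((x-1)/4)` if `p = 3`,
and `((p-1)!)^((x-1)/(p-2))` if `p > 3`.  Real exponents throughout. -/
noncomputable def hpfun (p : ℕ) (x : ℝ) : ℝ :=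
  if p = 2 then (3 : ℝ) ^ ((x - 1) / 2)
  else if p = 3 then (20 : ℝ) ^ ((x - 1) / 4)
  else ((Nat.factorial (p - 1) : ℝ)) ^ ((x - 1) / ((p : ℝ) - 2))

/-!
Both sides of the inequality are multiplicative in `t` up to the factors `h_2`, which are
designed so that everything reduces to the case `t = 1`: raising
`a (q^m - 1) ≤ 3^((m-1)/2) (q^3 - 1)^(m/3)` (with `a` the odd part of `m`) to the power `t`
and multiplying by `h_2(t)` gives `3^((mt-1)/2) (q^3 - 1)^(mt/3)`, which is also the right-hand
side. The case `t = 1` is checked on sixth powers. For `m ≤ 3` it is direct (an equality for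
`m = 3`; for `m = 2` the odd part `1` is needed). For `m ≥ 4` one bounds `a ≤ m`,
`q^m - 1 ≤ q^m` and `q^3 ≤ 8/7 (q^3 - 1)`, leaving the numerical inequality
`27 m^6 64^m ≤ (27 · 49)^m`.
-/

theorem Nat.twentySeven_mul_pow_six_mul_sixtyFour_pow_le {m : ℕ} (hm : 4 ≤ m) :
    27 * m ^ 6 * 64 ^ m ≤ (27 * 49) ^ m := by
  induction m, hm using Nat.le_induction with
  | base => norm_num
  | succ n hn ih =>
    have hstep : 64 * (n + 1) ^ 6 ≤ 27 * 49 * n ^ 6 := by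
      have : (4 * (n + 1)) ^ 6 ≤ (5 * n) ^ 6 := Nat.pow_le_pow_left (by omega) 6
      rw [mul_pow, mul_pow] at this
      omega
    calc 27 * (n + 1) ^ 6 * 64 ^ (n + 1) = 27 * 64 ^ n * (64 * (n + 1) ^ 6) := by ring
      _ ≤ 27 * 64 ^ n * (27 * 49 * n ^ 6) := by gcongr
      _ = 27 * 49 * (27 * n ^ 6 * 64 ^ n) := by ring
      _ ≤ 27 * 49 * (27 * 49) ^ n := by gcongr
      _ = (27 * 49) ^ (n + 1) := by ring

section

variable {q : ℝ} (hq : 2 ≤ q)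
include hq

theorem eight_le_pow_three_of_two_le : 8 ≤ q ^ 3 := by
  linarith [pow_le_pow_left₀ (by norm_num) hq 3]

theorem twentySeven_mul_mul_pow_sub_one_pow_six_le {m : ℕ} (hm : 4 ≤ m) :
    27 * (m * (q ^ m - 1)) ^ 6 ≤ 27 ^ m * (q ^ 3 - 1) ^ (2 * m) := by
  have hqm : 1 ≤ q ^ m := one_le_pow₀ (by linarith)
  have hq6 : 49 * q ^ 6 ≤ 64 * (q ^ 3 - 1) ^ 2 := by
    nlinarith [eight_le_pow_three_of_two_le hq]
  have hnat : (27 * m ^ 6 * 64 ^ m : ℝ) ≤ (27 * 49) ^ m := by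
    exact_mod_cast Nat.twentySeven_mul_pow_six_mul_sixtyFour_pow_le hm
  have hpow : (q ^ m - 1) ^ 6 ≤ (q ^ 6) ^ m := by
    rw [← pow_mul, mul_comm, pow_mul]
    gcongr
    all_goals linarith
  rw [← mul_le_mul_iff_left₀ (by positivity : (0 : ℝ) < 64 ^ m)]
  calc 27 * (m * (q ^ m - 1)) ^ 6 * 64 ^ m = 27 * m ^ 6 * 64 ^ m * (q ^ m - 1) ^ 6 := by ring
    _ ≤ 27 * m ^ 6 * 64 ^ m * (q ^ 6) ^ m := by gcongr
    _ ≤ (27 * 49) ^ m * (q ^ 6) ^ m := by gcongr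
    _ = 27 ^ m * (49 * q ^ 6) ^ m := by rw [mul_pow, mul_pow]; ring
    _ ≤ 27 ^ m * (64 * (q ^ 3 - 1) ^ 2) ^ m := by gcongr
    _ = 27 ^ m * (q ^ 3 - 1) ^ (2 * m) * 64 ^ m := by rw [mul_pow, pow_mul]; ring

theorem twentySeven_mul_ordCompl_two_mul_pow_sub_one_pow_six_le (m : ℕ) :
    27 * ((ordCompl[2] m : ℕ) * (q ^ m - 1)) ^ 6 ≤ 27 ^ m * (q ^ 3 - 1) ^ (2 * m) := by
  have hq3 := eight_le_pow_three_of_two_le hq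
  rcases Nat.lt_or_ge m 4 with hm | hm
  · have h2 : (2 : ℕ).factorization 2 = 1 := Nat.prime_two.factorization_self
    have h3 : (3 : ℕ).factorization 2 = 0 := Nat.factorization_eq_zero_of_not_dvd (by norm_num)
    interval_cases m
    · simp
    · norm_num
      nlinarith [sq_nonneg (q - 1), sq_nonneg q]
    · norm_num [h2]
      have hle : (q ^ 2 - 1) ^ 6 ≤ 2 ^ 4 * (q ^ 3 - 1) ^ 4 := calc
        (q ^ 2 - 1) ^ 6 ≤ (q ^ 2) ^ 6 := by gcongr <;> nlinarith
        _ = (q ^ 3) ^ 4 := by ring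
        _ ≤ (2 * (q ^ 3 - 1)) ^ 4 := by gcongr; linarith
        _ = 2 ^ 4 * (q ^ 3 - 1) ^ 4 := mul_pow ..
      nlinarith [pow_nonneg (by linarith : (0 : ℝ) ≤ q ^ 3 - 1) 4]
    · norm_num [h3]
      exact le_of_eq (by ring)
  · calc 27 * ((ordCompl[2] m : ℕ) * (q ^ m - 1)) ^ 6 ≤ 27 * (m * (q ^ m - 1)) ^ 6 := by
          have : 1 ≤ q ^ m := one_le_pow₀ (by linarith)
          have : ((ordCompl[2] m : ℕ) : ℝ) ≤ m := by exact_mod_cast Nat.ordCompl_le m 2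
          gcongr
      _ ≤ 27 ^ m * (q ^ 3 - 1) ^ (2 * m) := twentySeven_mul_mul_pow_sub_one_pow_six_le hq hm

theorem ordCompl_two_mul_pow_sub_one_le (m : ℕ) :
    ((ordCompl[2] m : ℕ) : ℝ) * (q ^ m - 1) ≤
      3 ^ (((m : ℝ) - 1) / 2) * (q ^ 3 - 1) ^ ((m : ℝ) / 3) := by
  have hE : 0 < q ^ 3 - 1 := by linarith [eight_le_pow_three_of_two_le hq]
  have hL : 0 ≤ ((ordCompl[2] m : ℕ) : ℝ) * (q ^ m - 1) :=
    mul_nonneg (Nat.cast_nonneg _) (by linarith [one_le_pow₀ (by linarith : 1 ≤ q) (n := m)])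
  have h3 : 27 * ((3 : ℝ) ^ (((m : ℝ) - 1) / 2)) ^ 6 = 27 ^ m := by
    rw [← Real.rpow_natCast _ 6, ← Real.rpow_mul (by norm_num),
      show (27 : ℝ) = 3 ^ (3 : ℝ) by norm_num, ← Real.rpow_add (by norm_num),
      ← Real.rpow_natCast _ m, ← Real.rpow_mul (by norm_num)]
    congr 1
    push_cast
    ring
  have hE6 : ((q ^ 3 - 1) ^ ((m : ℝ) / 3)) ^ 6 = (q ^ 3 - 1) ^ (2 * m) := by
    rw [← Real.rpow_natCast _ 6, ← Real.rpow_mul hE.le, ← Real.rpow_natCast _ (2 * m)]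
    congr 1
    push_cast
    ring
  have hR : 27 * (3 ^ (((m : ℝ) - 1) / 2) * (q ^ 3 - 1) ^ ((m : ℝ) / 3)) ^ 6 =
      27 ^ m * (q ^ 3 - 1) ^ (2 * m) := by
    rw [mul_pow, ← mul_assoc, h3, hE6]
  rw [← pow_le_pow_iff_left₀ hL (by positivity) (by norm_num : 6 ≠ 0),
    ← mul_le_mul_iff_right₀ (by norm_num : (0 : ℝ) < 27), hR]
  exact twentySeven_mul_ordCompl_two_mul_pow_sub_one_pow_six_le hq m

end

theorem hpfun_two (x : ℝ) : hpfun 2 x = 3 ^ ((x - 1) / 2) := if_pos rfl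

theorem pow_mul_hpfun_two_le {x E : ℝ} (hx : 0 ≤ x) (hE : 0 ≤ E) (m t : ℕ)
    (h : x ≤ 3 ^ (((m : ℝ) - 1) / 2) * E ^ ((m : ℝ) / 3)) :
    x ^ t * hpfun 2 t ≤ (3 * E) ^ (((m * t : ℕ) : ℝ) / 3) * hpfun 2 (((m * t : ℕ) : ℝ) / 3) := by
  have h3 : (0 : ℝ) < 3 := by norm_num
  have hrhs : (3 * E) ^ (((m * t : ℕ) : ℝ) / 3) * hpfun 2 (((m * t : ℕ) : ℝ) / 3) =
      3 ^ ((((m * t : ℕ) : ℝ) - 1) / 2) * E ^ (((m * t : ℕ) : ℝ) / 3) := by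
    rw [hpfun_two, Real.mul_rpow h3.le hE, mul_right_comm, ← Real.rpow_add h3]
    congr 2
    ring
  have hlhs : (3 ^ (((m : ℝ) - 1) / 2) * E ^ ((m : ℝ) / 3)) ^ t * hpfun 2 t =
      3 ^ ((((m * t : ℕ) : ℝ) - 1) / 2) * E ^ (((m * t : ℕ) : ℝ) / 3) := by
    rw [hpfun_two, mul_pow, ← Real.rpow_natCast _ t, ← Real.rpow_natCast (E ^ _) t,
      ← Real.rpow_mul h3.le, ← Real.rpow_mul hE, mul_right_comm, ← Real.rpow_add h3]
    congr 2 <;> push_cast <;> ring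
  rw [hrhs, ← hlhs, hpfun_two]
  gcongr

theorem mtbound_p_two_general
    (m t q f : ℕ) (hf : 0 < f) (hq : q = 2 ^ f) :
    (((m / 2 ^ (m.factorization 2) : ℕ) : ℝ) * ((q : ℝ) ^ m - 1)) ^ t * hpfun 2 (t : ℝ) ≤
      (3 * ((q : ℝ) ^ 3 - 1)) ^ (((m * t : ℕ) : ℝ) / 3) * hpfun 2 (((m * t : ℕ) : ℝ) / 3) := by
  have hq2 : (2 : ℝ) ≤ q := by
    rw [hq]
    exact_mod_cast Nat.le_self_pow hf.ne' 2
  have hq3 : (0 : ℝ) ≤ (q : ℝ) ^ 3 - 1 := by linarith [eight_le_pow_three_of_two_le hq2]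
  have hqm : (0 : ℝ) ≤ (q : ℝ) ^ m - 1 := sub_nonneg.2 (one_le_pow₀ (by linarith))
  exact pow_mul_hpfun_two_le (by positivity) hq3 m t (ordCompl_two_mul_pow_sub_one_le hq2 m)

/-- Lemma 8.1(i): for positive integers `m, t` and `q` a power of `2`,
`(m_{2'} (q^m - 1))^t * h_2(t) ≤ (3(q^3 - 1))^(mt/3) * h_2(mt/3)`, where `m_{2'}` is the
largest odd divisor of `m` (i.e. `m / 2 ^ (m.factorization 2)`). -/
theorem mtbound_p_two
    (m t q f : ℕ) (hm : 0 < m) (ht : 0 < t) (hf : 0 < f) (hq : q = 2 ^ f) :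
    (((m / 2 ^ (m.factorization 2) : ℕ) : ℝ) * ((q : ℝ) ^ m - 1)) ^ t * hpfun 2 (t : ℝ) ≤
      (3 * ((q : ℝ) ^ 3 - 1)) ^ (((m * t : ℕ) : ℝ) / 3) * hpfun 2 (((m * t : ℕ) : ℝ) / 3) :=
  mtbound_p_two_general m t q f hf hq
end

section
/- Let p > 2 be a prime, let q be a power of p with q ∉ {3, 5, 7, 9, 11, 27}, and let m and t be positive integers. Then (m_{p'} · (q^m - 1))^t · h_p(t) ≤ (q - 1)^(mt) · h_p(mt), where m_{p'} is the largest divisor of m coprime to p. -/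
lemma three_pow_le_factorial (n : ℕ) (hn : 6 ≤ n) : 3 ^ (n - 1) ≤ n.factorial := by
  induction n, hn using Nat.le_induction with
  | base => decide
  | succ k hk ih =>
    have h1 : k + 1 - 1 = k := rfl
    rw [h1]
    have h2 : 3 ^ k = 3 ^ (k - 1) * 3 := by
      rw [← pow_succ]; congr 1; omega
    rw [h2, Nat.factorial_succ]
    calc 3 ^ (k - 1) * 3 ≤ k.factorial * (k + 1) := Nat.mul_le_mul ih (by omega)
      _ = (k + 1) * k.factorial := Nat.mul_comm _ _

lemma le_rpow_inv' (x y : ℝ) (n : ℕ) (hn : 0 < n) (hx : 0 ≤ x) (h : x ^ n ≤ y) :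
    x ≤ y ^ ((1 : ℝ) / (n : ℝ)) := by
  have hn' : (n : ℝ) ≠ 0 := by exact_mod_cast hn.ne'
  have h1 : x = (x ^ n) ^ ((1 : ℝ) / (n : ℝ)) := by
    rw [← Real.rpow_natCast x n, ← Real.rpow_mul hx, mul_one_div, div_self hn', Real.rpow_one]
  rw [h1]
  exact Real.rpow_le_rpow (pow_nonneg hx n) h (by positivity)

lemma core_ineq' (q c : ℝ) (hq : 2 ≤ q) (hc : 2 * q ^ 2 ≤ c * (q - 1) ^ 2) :
    ∀ m : ℕ, 2 ≤ m → (m : ℝ) * q ^ m ≤ (q - 1) ^ m * c ^ (m - 1) := by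
  have hq0 : 0 < q := by linarith
  have hq1 : 0 < q - 1 := by linarith
  have hc0 : 0 < c := by nlinarith
  have hkey : 2 * q ≤ c * (q - 1) := by nlinarith
  intro m hm
  induction m, hm using Nat.le_induction with
  | base => norm_num; nlinarith [hc]
  | succ k hk ih =>
    have hk2 : k - 1 + 1 = k := by omega
    have hkR : (2 : ℝ) ≤ (k : ℝ) := by exact_mod_cast hk
    have hstep : ((k : ℝ) + 1) * q ≤ (c * (q - 1)) * k := by
      nlinarith [mul_le_mul_of_nonneg_left hkey (by positivity : (0:ℝ) ≤ (k:ℝ)),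
        mul_nonneg (by linarith : (0:ℝ) ≤ (k:ℝ) - 1) hq0.le]
    have h1 : ((k : ℝ) + 1) * q ^ (k + 1) ≤ (c * (q - 1)) * ((k : ℝ) * q ^ k) := by
      calc ((k : ℝ) + 1) * q ^ (k + 1) = (((k : ℝ) + 1) * q) * q ^ k := by ring
        _ ≤ ((c * (q - 1)) * k) * q ^ k := mul_le_mul_of_nonneg_right hstep (by positivity)
        _ = (c * (q - 1)) * ((k : ℝ) * q ^ k) := by ring
    have h3 : k + 1 - 1 = k := rfl
    rw [h3]
    push_cast
    calc ((k : ℝ) + 1) * q ^ (k + 1) ≤ (c * (q - 1)) * ((k : ℝ) * q ^ k) := h1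
      _ ≤ (c * (q - 1)) * ((q - 1) ^ k * c ^ (k - 1)) :=
          mul_le_mul_of_nonneg_left ih (by positivity)
      _ = (q - 1) ^ (k + 1) * c ^ (k - 1 + 1) := by ring
      _ = (q - 1) ^ (k + 1) * c ^ k := by rw [hk2]

lemma final_step' (q : ℝ) (m t mp : ℕ) (H : ℝ) (n : ℕ)
    (hq : 2 ≤ q) (hH : 0 < H) (hn : 0 < n) (hm : 0 < m) (ht : 0 < t)
    (hmp1 : 1 ≤ mp) (hmpm : mp ≤ m)
    (hc : 2 * q ^ 2 ≤ H ^ ((1 : ℝ) / (n : ℝ)) * (q - 1) ^ 2) :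
    ((mp : ℝ) * (q ^ m - 1)) ^ t * H ^ (((t : ℝ) - 1) / (n : ℝ)) ≤
      (q - 1) ^ (m * t) * H ^ ((((m * t : ℕ) : ℝ) - 1) / (n : ℝ)) := by
  set c : ℝ := H ^ ((1 : ℝ) / (n : ℝ)) with hcdef
  have hc0 : 0 < c := Real.rpow_pos_of_pos hH _
  have hq1 : (0 : ℝ) < q - 1 := by linarith
  have hqm : (1 : ℝ) ≤ q ^ m := one_le_pow₀ (by linarith)
  have hA0 : 0 ≤ (mp : ℝ) * (q ^ m - 1) := by
    have : (0:ℝ) ≤ (mp : ℝ) := by positivity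
    nlinarith
  have key : (mp : ℝ) * (q ^ m - 1) ≤ (q - 1) ^ m * c ^ (m - 1) := by
    rcases Nat.lt_or_ge m 2 with h2 | h2
    · have hm1 : m = 1 := by omega
      have hmpe : mp = 1 := by omega
      subst hm1; subst hmpe
      simp
    · calc (mp : ℝ) * (q ^ m - 1) ≤ (m : ℝ) * q ^ m := by
            have h3 : (mp : ℝ) ≤ (m : ℝ) := by exact_mod_cast hmpm
            have h4 : q ^ m - 1 ≤ q ^ m := by linarith
            have h5 : (0:ℝ) ≤ q ^ m - 1 := by linarith
            exact mul_le_mul h3 h4 h5 (by positivity)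
        _ ≤ (q - 1) ^ m * c ^ (m - 1) := core_ineq' q c hq hc m h2
  have h2 : ((mp : ℝ) * (q ^ m - 1)) ^ t ≤ ((q - 1) ^ m * c ^ (m - 1)) ^ t :=
    pow_le_pow_left₀ hA0 key t
  have hn' : (n : ℝ) ≠ 0 := by exact_mod_cast hn.ne'
  calc ((mp : ℝ) * (q ^ m - 1)) ^ t * H ^ (((t : ℝ) - 1) / (n : ℝ))
      ≤ ((q - 1) ^ m * c ^ (m - 1)) ^ t * H ^ (((t : ℝ) - 1) / (n : ℝ)) :=
        mul_le_mul_of_nonneg_right h2 (Real.rpow_nonneg hH.le _)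
    _ = (q - 1) ^ (m * t) * (c ^ ((m - 1) * t) * H ^ (((t : ℝ) - 1) / (n : ℝ))) := by
        rw [mul_pow, ← pow_mul, ← pow_mul]; ring
    _ = (q - 1) ^ (m * t) * H ^ ((((m * t : ℕ) : ℝ) - 1) / (n : ℝ)) := by
        congr 1
        rw [hcdef, ← Real.rpow_natCast (H ^ ((1 : ℝ) / (n : ℝ))) ((m - 1) * t),
          ← Real.rpow_mul hH.le, ← Real.rpow_add hH]
        congr 1
        have hcast : (((m - 1) * t : ℕ) : ℝ) = ((m : ℝ) - 1) * (t : ℝ) := by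
          push_cast [Nat.cast_sub hm]
          ring
        rw [hcast]
        push_cast
        field_simp
        ring


/-- Lemma 8.1(vii), first part: for an odd prime `p`, a power `q` of `p` with
`q ∉ {3, 5, 7, 9, 11, 27}`, and positive integers `m, t`,
`(m_{p'} (q^m - 1))^t * h_p(t) ≤ (q - 1)^(mt) * h_p(mt)`, where `m_{p'}` is the largest
divisor of `m` coprime to `p` (i.e. `m / p ^ (m.factorization p)`). -/
theorem mtbound_generic_q
    (p m t q f : ℕ) (hp : p.Prime) (hp2 : 2 < p)
    (hm : 0 < m) (ht : 0 < t) (hf : 0 < f) (hq : q = p ^ f)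
    (hq3 : q ≠ 3) (hq5 : q ≠ 5) (hq7 : q ≠ 7) (hq9 : q ≠ 9) (hq11 : q ≠ 11) (hq27 : q ≠ 27) :
    (((m / p ^ (m.factorization p) : ℕ) : ℝ) * ((q : ℝ) ^ m - 1)) ^ t * hpfun p (t : ℝ) ≤
      ((q : ℝ) - 1) ^ (m * t) * hpfun p ((m * t : ℕ) : ℝ) := by
  have hpne2 : p ≠ 2 := by omega
  have hodd : p % 2 = 1 := hp.eq_two_or_odd.resolve_left hpne2
  have hqp : p ≤ q := hq ▸ Nat.le_self_pow hf.ne' p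
  have hq2 : 2 ≤ q := by omega
  have hQ2 : (2 : ℝ) ≤ (q : ℝ) := by exact_mod_cast hq2
  have hmp1 : 1 ≤ m / p ^ (m.factorization p) := Nat.ordCompl_pos p hm.ne'
  have hmpm : m / p ^ (m.factorization p) ≤ m := Nat.div_le_self _ _
  by_cases h3 : p = 3
  · -- q = 3^f with f ≥ 4, so q ≥ 81
    subst h3
    have hf4 : 4 ≤ f := by
      by_contra hlt
      push_neg at hlt
      interval_cases f <;> simp_all
    have hq81 : 81 ≤ q := by
      rw [hq]
      calc 81 = 3 ^ 4 := by norm_num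
        _ ≤ 3 ^ f := Nat.pow_le_pow_right (by norm_num) hf4
    have hQ81 : (81 : ℝ) ≤ (q : ℝ) := by exact_mod_cast hq81
    have hhp : ∀ x : ℝ, hpfun 3 x = (20 : ℝ) ^ ((x - 1) / ((4 : ℕ) : ℝ)) := by
      intro x; simp [hpfun]
    rw [hhp, hhp]
    apply final_step' _ _ _ _ _ _ hQ2 (by norm_num) (by norm_num) hm ht hmp1 hmpm
    have hcb : (2.11 : ℝ) ≤ (20 : ℝ) ^ ((1 : ℝ) / ((4 : ℕ) : ℝ)) :=
      le_rpow_inv' _ _ 4 (by norm_num) (by norm_num) (by norm_num)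
    nlinarith [mul_le_mul_of_nonneg_right hcb (sq_nonneg ((q : ℝ) - 1)), sq_nonneg ((q:ℝ) - 81)]
  · by_cases h5 : p = 5
    · subst h5
      have hf2 : 2 ≤ f := by
        by_contra hlt
        push_neg at hlt
        interval_cases f <;> simp_all
      have hq25 : 25 ≤ q := by
        rw [hq]
        calc 25 = 5 ^ 2 := by norm_num
          _ ≤ 5 ^ f := Nat.pow_le_pow_right (by norm_num) hf2
      have hQ25 : (25 : ℝ) ≤ (q : ℝ) := by exact_mod_cast hq25
      have hhp : ∀ x : ℝ, hpfun 5 x = ((24 : ℕ) : ℝ) ^ ((x - 1) / ((3 : ℕ) : ℝ)) := by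
        intro x; simp [hpfun]; norm_num [Nat.factorial]
      rw [hhp, hhp]
      apply final_step' _ _ _ _ _ _ hQ2 (by norm_num) (by norm_num) hm ht hmp1 hmpm
      have hcb : (2.8 : ℝ) ≤ ((24 : ℕ) : ℝ) ^ ((1 : ℝ) / ((3 : ℕ) : ℝ)) :=
        le_rpow_inv' _ _ 3 (by norm_num) (by norm_num) (by norm_num)
      nlinarith [mul_le_mul_of_nonneg_right hcb (sq_nonneg ((q : ℝ) - 1)), sq_nonneg ((q:ℝ) - 25)]
    · -- p ≥ 7
      have hp7 : 7 ≤ p := by omega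
      have hq7' : (7 : ℝ) ≤ (q : ℝ) := by exact_mod_cast le_trans hp7 hqp
      have hcastp : ((p - 2 : ℕ) : ℝ) = (p : ℝ) - 2 := by
        push_cast [Nat.cast_sub (show 2 ≤ p by omega)]; ring
      have hhp : ∀ x : ℝ,
          hpfun p x = ((p - 1).factorial : ℝ) ^ ((x - 1) / ((p - 2 : ℕ) : ℝ)) := by
        intro x; simp [hpfun, hpne2, h3, hcastp]
      rw [hhp, hhp]
      have hfact : (3 : ℝ) ^ (p - 2) ≤ ((p - 1).factorial : ℝ) := by
        have h6 : 6 ≤ p - 1 := by omega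
        have := three_pow_le_factorial (p - 1) h6
        have hee : p - 1 - 1 = p - 2 := by omega
        rw [hee] at this
        exact_mod_cast this
      apply final_step' _ _ _ _ _ _ hQ2 (by positivity) (by omega) hm ht hmp1 hmpm
      have hcb : (3 : ℝ) ≤ ((p - 1).factorial : ℝ) ^ ((1 : ℝ) / ((p - 2 : ℕ) : ℝ)) :=
        le_rpow_inv' _ _ (p - 2) (by omega) (by norm_num) hfact
      nlinarith [mul_le_mul_of_nonneg_right hcb (sq_nonneg ((q : ℝ) - 1)), sq_nonneg ((q:ℝ) - 7)]
end

section
/- Let q ∈ {5, 7, 11}, let p be the prime with q a power of p (so p = q here), and let m and t be positive integers. Then (m · (q^m - 1))^t · h_p(t) ≤ α(q)^(mt/2) · h_p(mt/2), where α(5) := 96, α(7) := 144, α(11) := 600, and the exponent mt/2 is a real number. -/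
lemma natkey (q e G K : ℕ) (hq : 1 ≤ q)
    (hbase : (q - 1) ^ e * G ≤ K) (hstep : 2 ^ e * (q + 1) ^ e ≤ K) :
    ∀ m, 1 ≤ m → m ^ e * (q ^ m - 1) ^ e * G ≤ K ^ m := by
  intro m hm
  induction m with
  | zero => omega
  | succ n ih =>
    rcases Nat.eq_or_lt_of_le hm with h1 | h1
    · have : n = 0 := by omega
      subst this
      simpa using hbase
    · have hn : 1 ≤ n := by omega
      have ihn := ih hn
      have hqa : q ≤ q ^ n := Nat.le_self_pow (by omega) q
      have hq1 : 1 ≤ q ^ n := le_trans hq hqa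
      have hsub : q ^ (n + 1) - 1 ≤ (q + 1) * (q ^ n - 1) := by
        have hq2 : 1 ≤ q ^ n * q := Nat.mul_pos hq1 hq
        rw [pow_succ]
        zify [hq1, hq2]
        nlinarith [hqa]
      have h2 : n + 1 ≤ 2 * n := by omega
      calc (n + 1) ^ e * (q ^ (n + 1) - 1) ^ e * G
          ≤ (2 * n) ^ e * ((q + 1) * (q ^ n - 1)) ^ e * G := by
            exact Nat.mul_le_mul_right G
              (Nat.mul_le_mul (Nat.pow_le_pow_left h2 e) (Nat.pow_le_pow_left hsub e))
        _ = (2 ^ e * (q + 1) ^ e) * (n ^ e * (q ^ n - 1) ^ e * G) := by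
            rw [mul_pow, mul_pow]; ring
        _ ≤ K * K ^ n := Nat.mul_le_mul hstep ihn
        _ = K ^ (n + 1) := by rw [pow_succ]; ring

lemma realkey (m e : ℕ) (Q α F d K : ℝ) (hm : 1 ≤ m) (he : 0 < e)
    (hQ : 1 ≤ Q) (hα : 0 < α) (hF : 0 < F)
    (hd : (e : ℝ) = 2 * d) (hK : K = α ^ (d : ℝ) * F)
    (h : ((m : ℝ) * (Q ^ m - 1)) ^ e * F ^ 2 ≤ K ^ m) :
    (m : ℝ) * (Q ^ m - 1) ≤ α ^ ((m : ℝ) / 2) * F ^ (((m : ℝ) - 2) / (2 * d)) := by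
  have hd0 : 0 < d := by
    have : (0 : ℝ) < (e : ℝ) := by exact_mod_cast he
    linarith [this, hd]
  have hQm : (1 : ℝ) ≤ Q ^ m := one_le_pow₀ hQ
  have hL0 : 0 ≤ (m : ℝ) * (Q ^ m - 1) :=
    mul_nonneg (Nat.cast_nonneg m) (by linarith)
  have hR0 : 0 ≤ α ^ ((m : ℝ) / 2) * F ^ (((m : ℝ) - 2) / (2 * d)) :=
    mul_nonneg (Real.rpow_nonneg hα.le _) (Real.rpow_nonneg hF.le _)
  refine le_of_pow_le_pow_left₀ he.ne' hR0 ?_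
  have hRe : (α ^ ((m : ℝ) / 2) * F ^ (((m : ℝ) - 2) / (2 * d))) ^ e * F ^ 2 = K ^ m := by
    rw [mul_pow, ← Real.rpow_natCast (α ^ ((m:ℝ)/2)) e,
      ← Real.rpow_natCast (F ^ (((m:ℝ)-2)/(2*d))) e,
      ← Real.rpow_mul hα.le, ← Real.rpow_mul hF.le, hd]
    have e1 : (m : ℝ) / 2 * (2 * d) = d * m := by ring
    have e2 : ((m : ℝ) - 2) / (2 * d) * (2 * d) = (m : ℝ) - 2 := by
      field_simp
    rw [e1, e2, hK, mul_pow, ← Real.rpow_natCast (α ^ (d:ℝ)) m, ← Real.rpow_mul hα.le]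
    rw [Real.rpow_sub hF, mul_assoc, Real.rpow_two, Real.rpow_natCast]
    field_simp
  have h2 : ((m : ℝ) * (Q ^ m - 1)) ^ e * F ^ 2 ≤
      (α ^ ((m : ℝ) / 2) * F ^ (((m : ℝ) - 2) / (2 * d))) ^ e * F ^ 2 := by
    rw [hRe]; exact h
  exact le_of_mul_le_mul_right h2 (by positivity)

lemma assemble (m t : ℕ) (Q α F d : ℝ) (ht : 1 ≤ t)
    (hQ : 1 ≤ Q) (hα : 0 ≤ α) (hF : 0 < F) (hd : 0 < d)
    (hper : (m : ℝ) * (Q ^ m - 1) ≤ α ^ ((m : ℝ) / 2) * F ^ (((m : ℝ) - 2) / (2 * d))) :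
    ((m : ℝ) * (Q ^ m - 1)) ^ t * F ^ (((t : ℝ) - 1) / d) ≤
      α ^ (((m * t : ℕ) : ℝ) / 2) * F ^ ((((m * t : ℕ) : ℝ) / 2 - 1) / d) := by
  have hQm : (1 : ℝ) ≤ Q ^ m := one_le_pow₀ hQ
  have hL0 : 0 ≤ (m : ℝ) * (Q ^ m - 1) :=
    mul_nonneg (Nat.cast_nonneg m) (by linarith)
  calc ((m : ℝ) * (Q ^ m - 1)) ^ t * F ^ (((t : ℝ) - 1) / d)
      ≤ (α ^ ((m : ℝ) / 2) * F ^ (((m : ℝ) - 2) / (2 * d))) ^ t * F ^ (((t : ℝ) - 1) / d) := by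
        exact mul_le_mul_of_nonneg_right (pow_le_pow_left₀ hL0 hper t)
          (Real.rpow_nonneg hF.le _)
    _ = α ^ (((m * t : ℕ) : ℝ) / 2) * F ^ ((((m * t : ℕ) : ℝ) / 2 - 1) / d) := by
        rw [mul_pow, ← Real.rpow_natCast (α ^ ((m:ℝ)/2)) t,
          ← Real.rpow_natCast (F ^ (((m:ℝ)-2)/(2*d))) t,
          ← Real.rpow_mul hα, ← Real.rpow_mul hF.le,
          mul_assoc, ← Real.rpow_add hF]
        congr 1
        · congr 1
          push_cast
          ring
        · congr 1
          push_cast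
          field_simp
          ring


/-- Lemma 8.1(v): for `q ∈ {5, 7, 11}` (each of which is prime, so `p = q`) and positive
integers `m, t`, `(m (q^m - 1))^t * h_q(t) ≤ α(q)^(mt/2) * h_q(mt/2)`, where
`α(5) = 96`, `α(7) = 144`, `α(11) = 600`. -/
theorem mtbound_q_5_7_11
    (q m t : ℕ) (hq : q = 5 ∨ q = 7 ∨ q = 11) (hm : 0 < m) (ht : 0 < t) :
    ((m : ℝ) * ((q : ℝ) ^ m - 1)) ^ t * hpfun q (t : ℝ) ≤
      (if q = 5 then (96 : ℝ) else if q = 7 then (144 : ℝ) else (600 : ℝ)) ^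
          (((m * t : ℕ) : ℝ) / 2) *
        hpfun q (((m * t : ℕ) : ℝ) / 2) := by
  have hm1 : 1 ≤ m := hm
  have ht1 : 1 ≤ t := ht
  rcases hq with rfl | rfl | rfl

  · -- q = 5
    have h1 : 1 ≤ 5 ^ m := Nat.one_le_pow _ _ (by norm_num)
    have h5 : ((5 ^ m - 1 : ℕ) : ℝ) = (5 : ℝ) ^ m - 1 := by
      rw [Nat.cast_sub h1]; push_cast; ring
    have hnat := natkey 5 6 576 21233664 (by norm_num) (by norm_num) (by norm_num) m hm
    have h0 := (Nat.cast_le (α := ℝ)).mpr hnat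
    push_cast [h5] at h0
    have hcast : ((m : ℝ) * ((5 : ℝ) ^ m - 1)) ^ 6 * (24 : ℝ) ^ 2 ≤ (21233664 : ℝ) ^ m := by
      calc ((m : ℝ) * ((5 : ℝ) ^ m - 1)) ^ 6 * (24 : ℝ) ^ 2
          = (m : ℝ) ^ 6 * ((5 : ℝ) ^ m - 1) ^ 6 * 576 := by rw [mul_pow]; norm_num
        _ ≤ _ := h0
    have hK : (21233664 : ℝ) = (96 : ℝ) ^ ((3 : ℕ) : ℝ) * 24 := by
      rw [Real.rpow_natCast]; norm_num
    have hper := realkey m 6 5 96 24 3 21233664 hm1 (by norm_num) (by norm_num)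
      (by norm_num) (by norm_num) (by norm_num) (by rw [hK]; norm_num) hcast
    have main := assemble m t 5 96 24 3 ht1 (by norm_num) (by norm_num)
      (by norm_num) (by norm_num) hper
    push_cast at main ⊢
    norm_num [hpfun, Nat.factorial]
    convert main using 2 <;> norm_num

  · -- q = 7
    have h1 : 1 ≤ 7 ^ m := Nat.one_le_pow _ _ (by norm_num)
    have h5 : ((7 ^ m - 1 : ℕ) : ℝ) = (7 : ℝ) ^ m - 1 := by
      rw [Nat.cast_sub h1]; push_cast; ring
    have hnat := natkey 7 10 518400 44580502241280 (by norm_num) (by norm_num) (by norm_num) m hm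
    have h0 := (Nat.cast_le (α := ℝ)).mpr hnat
    push_cast [h5] at h0
    have hcast : ((m : ℝ) * ((7 : ℝ) ^ m - 1)) ^ 10 * (720 : ℝ) ^ 2 ≤ (44580502241280 : ℝ) ^ m := by
      calc ((m : ℝ) * ((7 : ℝ) ^ m - 1)) ^ 10 * (720 : ℝ) ^ 2
          = (m : ℝ) ^ 10 * ((7 : ℝ) ^ m - 1) ^ 10 * 518400 := by rw [mul_pow]; norm_num
        _ ≤ _ := h0
    have hK : (44580502241280 : ℝ) = (144 : ℝ) ^ ((5 : ℕ) : ℝ) * 720 := by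
      rw [Real.rpow_natCast]; norm_num
    have hper := realkey m 10 7 144 720 5 44580502241280 hm1 (by norm_num) (by norm_num)
      (by norm_num) (by norm_num) (by norm_num) (by rw [hK]; norm_num) hcast
    have main := assemble m t 7 144 720 5 ht1 (by norm_num) (by norm_num)
      (by norm_num) (by norm_num) hper
    push_cast at main ⊢
    norm_num [hpfun, Nat.factorial]
    convert main using 2 <;> norm_num

  · -- q = 11
    have h1 : 1 ≤ 11 ^ m := Nat.one_le_pow _ _ (by norm_num)
    have h5 : ((11 ^ m - 1 : ℕ) : ℝ) = (11 : ℝ) ^ m - 1 := by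
      rw [Nat.cast_sub h1]; push_cast; ring
    have hnat := natkey 11 18 13168189440000 36569943244800000000000000000000 (by norm_num) (by norm_num) (by norm_num) m hm
    have h0 := (Nat.cast_le (α := ℝ)).mpr hnat
    push_cast [h5] at h0
    have hcast : ((m : ℝ) * ((11 : ℝ) ^ m - 1)) ^ 18 * (3628800 : ℝ) ^ 2 ≤ (36569943244800000000000000000000 : ℝ) ^ m := by
      calc ((m : ℝ) * ((11 : ℝ) ^ m - 1)) ^ 18 * (3628800 : ℝ) ^ 2
          = (m : ℝ) ^ 18 * ((11 : ℝ) ^ m - 1) ^ 18 * 13168189440000 := by rw [mul_pow]; norm_num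
        _ ≤ _ := h0
    have hK : (36569943244800000000000000000000 : ℝ) = (600 : ℝ) ^ ((9 : ℕ) : ℝ) * 3628800 := by
      rw [Real.rpow_natCast]; norm_num
    have hper := realkey m 18 11 600 3628800 9 36569943244800000000000000000000 hm1 (by norm_num) (by norm_num)
      (by norm_num) (by norm_num) (by norm_num) (by rw [hK]; norm_num) hcast
    have main := assemble m t 11 600 3628800 9 ht1 (by norm_num) (by norm_num)
      (by norm_num) (by norm_num) hper
    push_cast at main ⊢
    norm_num [hpfun, Nat.factorial]
    convert main using 2 <;> norm_num
end
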